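/- Let E be a real inner product space, T ⊆ E a subspace, n ∈ Tᗮ a unit vector, and A : E → E a linear map with A(T) ⊆ T which is symmetric on T. Fix k ∈ ℝ and r > 0. For j = 1, 2 let x_j ∈ T, K_j ∈ Tᗮ, and set Y_j = ⟨K_j, n⟩•n + cos_k(r)•x_j + sin_k(r)•((1/r)•K_j − A x_j − (1/r)⟨K_j, n⟩•n). Then ⟨Y₁, Y₂⟩ = cos_k(r)²⟨x₁, x₂⟩ − 2 sin_k(r) cos_k(r)⟨A x₁, x₂⟩ + sin_k(r)²⟨A x₁, A x₂⟩ + (sin_k(r)²/r²)⟨K₁, K₂⟩ + (1 − sin_k(r)²/r²)⟨K₁, n⟩⟨K₂, n⟩. -/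
import Mathlib


open RealInnerProductSpace

/-- `sin_k`: the generalized sine function of curvature `k`. -/
noncomputable def sink (k s : ℝ) : ℝ :=
  if 0 < k then Real.sin (Real.sqrt k * s) / Real.sqrt k
  else if k = 0 then s
  else Real.sinh (Real.sqrt (-k) * s) / Real.sqrt (-k)

/-- `cos_k`: the generalized cosine function of curvature `k` (the derivative of `sin_k`). -/
noncomputable def cosk (k s : ℝ) : ℝ :=
  if 0 < k then Real.cos (Real.sqrt k * s)
  else if k = 0 then 1
  else Real.cosh (Real.sqrt (-k) * s)

/-- **Theorem C (algebraic form).** In a space form of curvature `k`, with `T` the tangent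
space of `M` at `p`, `n ∈ Tᗮ` a unit normal, `A` the shape operator in the direction `n`,
the Jacobi fields realizing `exp_* u_j` at `s = r` are
`Y_j = ⟨K_j, n⟩•n + cos_k(r)•x_j + sin_k(r)•((1/r)•K_j − A x_j − (1/r)⟨K_j, n⟩•n)`,
and their inner product gives the pulled-back metric formula of Theorem C. -/
theorem expg_eq_sasaki_spaceform
    {E : Type*} [NormedAddCommGroup E] [InnerProductSpace ℝ E]
    (T : Submodule ℝ E) (n : E) (hn : n ∈ Tᗮ) (hn1 : ‖n‖ = 1)
    (A : E →ₗ[ℝ] E)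
    (hAT : ∀ x ∈ T, A x ∈ T)
    (hsym : ∀ x ∈ T, ∀ y ∈ T, ⟪A x, y⟫ = ⟪x, A y⟫)
    (k r : ℝ) (hr : 0 < r)
    (x₁ x₂ : E) (hx₁ : x₁ ∈ T) (hx₂ : x₂ ∈ T)
    (K₁ K₂ : E) (hK₁ : K₁ ∈ Tᗮ) (hK₂ : K₂ ∈ Tᗮ)
    (Y₁ Y₂ : E)
    (hY₁ : Y₁ = ⟪K₁, n⟫ • n + cosk k r • x₁
      + sink k r • ((1 / r) • K₁ - A x₁ - ((1 / r) * ⟪K₁, n⟫) • n))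
    (hY₂ : Y₂ = ⟪K₂, n⟫ • n + cosk k r • x₂
      + sink k r • ((1 / r) • K₂ - A x₂ - ((1 / r) * ⟪K₂, n⟫) • n)) :
    ⟪Y₁, Y₂⟫
      = cosk k r ^ 2 * ⟪x₁, x₂⟫
        - 2 * sink k r * cosk k r * ⟪A x₁, x₂⟫
        + sink k r ^ 2 * ⟪A x₁, A x₂⟫
        + (sink k r ^ 2 / r ^ 2) * ⟪K₁, K₂⟫
        + (1 - sink k r ^ 2 / r ^ 2) * (⟪K₁, n⟫ * ⟪K₂, n⟫) := by
  subst hY₁ hY₂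
  have hr' : r ≠ 0 := ne_of_gt hr
  have hnn : ⟪n, n⟫ = (1:ℝ) := by
    rw [real_inner_self_eq_norm_sq, hn1]; norm_num
  have hperp : ∀ u ∈ T, ∀ v ∈ Tᗮ, ⟪u, v⟫ = (0:ℝ) := fun u hu v hv =>
    Submodule.mem_orthogonal T v |>.mp hv u hu
  have h1 : ⟪x₁, n⟫ = (0:ℝ) := hperp _ hx₁ _ hn
  have h2 : ⟪n, x₂⟫ = (0:ℝ) := by rw [real_inner_comm]; exact hperp _ hx₂ _ hn
  have h3 : ⟪x₁, K₂⟫ = (0:ℝ) := hperp _ hx₁ _ hK₂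
  have h4 : ⟪K₁, x₂⟫ = (0:ℝ) := by rw [real_inner_comm]; exact hperp _ hx₂ _ hK₁
  have h5 : ⟪A x₁, n⟫ = (0:ℝ) := hperp _ (hAT _ hx₁) _ hn
  have h6 : ⟪n, A x₂⟫ = (0:ℝ) := by rw [real_inner_comm]; exact hperp _ (hAT _ hx₂) _ hn
  have h7 : ⟪A x₁, K₂⟫ = (0:ℝ) := hperp _ (hAT _ hx₁) _ hK₂
  have h8 : ⟪K₁, A x₂⟫ = (0:ℝ) := by rw [real_inner_comm]; exact hperp _ (hAT _ hx₂) _ hK₁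
  have h9 : ⟪n, K₂⟫ = ⟪K₂, n⟫ := real_inner_comm _ _
  have h10 : ⟪x₁, A x₂⟫ = ⟪A x₁, x₂⟫ := (hsym _ hx₁ _ hx₂).symm
  have h11 : ⟪K₁, n⟫ • n + cosk k r • x₁
      + sink k r • ((1 / r) • K₁ - A x₁ - ((1 / r) * ⟪K₁, n⟫) • n) = _ := rfl
  simp only [inner_add_left, inner_add_right, inner_sub_left, inner_sub_right,
    real_inner_smul_left, real_inner_smul_right, h1, h2, h3, h4, h5, h6, h7, h8, h9, h10, hnn]
  field_simp
  ring
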